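/- Forward move F2: If (α_n)_{n≥0}, (β_n)_{n≥0} form a Bailey pair with respect to base a, where a q^m ≠ 1 for all m ≥ 1 and 1 + a q^m ≠ 0 for all m ≥ 0, then the sequences β'_n = Σ_{j=0}^{n} ((−q;q)_j q^{binom(j,2)} a^j / ((q;q)_{n−j} (−a;q)_n)) β_j and α'_n = ((−q;q)_n q^{binom(n,2)} a^n / (−a;q)_n) α_n also form a Bailey pair with respect to base a, where binom(m,2) = m(m−1)/2. -/

import Mathlib

/-!
Substitute the Bailey relation for `β j` and exchange the two sums. With `j = t + i` and
`n = t + m`, the coefficient of `α t` in `β' n`, after the factor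
`(-q;q)ₜ q^(t choose 2) aᵗ / (-a;q)ₜ` is pulled out, is a terminating `q`-Chu–Vandermonde sum
with `b = a qᵗ` and `c = qᵗ`. That sum is evaluated by induction on `m` from a `q`-Pascal
recurrence for its terms.
-/

open Finset

noncomputable def qPoch (a q : ℂ) (n : ℕ) : ℂ :=
  ∏ t ∈ Finset.range n, (1 - a * q ^ t)

noncomputable def qPochInf (a q : ℂ) : ℂ :=
  ∏' t : ℕ, (1 - a * q ^ t)

def IsBaileyPair (q a : ℂ) (α β : ℕ → ℂ) : Prop :=
  ∀ n : ℕ, β n =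
    ∑ t ∈ Finset.range (n + 1), α t / (qPoch q q (n - t) * qPoch (a * q) q (n + t))

lemma qPoch_succ (x q : ℂ) (n : ℕ) : qPoch x q (n + 1) = qPoch x q n * (1 - x * q ^ n) :=
  prod_range_succ _ n

lemma qPoch_add (x q : ℂ) (m n : ℕ) :
    qPoch x q (m + n) = qPoch x q m * qPoch (x * q ^ m) q n := by
  simp only [qPoch, prod_range_add, pow_add, mul_assoc]

lemma qPoch_succ' (x q : ℂ) (n : ℕ) : qPoch x q (n + 1) = (1 - x) * qPoch (x * q) q n := by
  rw [add_comm, qPoch_add, pow_one, qPoch, prod_range_one, pow_zero, mul_one]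

lemma qPoch_ne_zero {x q : ℂ} (h : ∀ t : ℕ, x * q ^ t ≠ 1) (n : ℕ) : qPoch x q n ≠ 0 :=
  prod_ne_zero_iff.mpr fun t _ => sub_ne_zero.mpr (h t).symm

lemma qPoch_self_ne_zero {q : ℂ} (hq : ‖q‖ < 1) (n : ℕ) : qPoch q q n ≠ 0 := by
  refine qPoch_ne_zero (fun t h => ?_) n
  have : ‖q‖ ^ (t + 1) < 1 := pow_lt_one₀ (norm_nonneg q) hq t.succ_ne_zero
  rw [← norm_pow, pow_succ', h, norm_one] at this
  exact this.false

lemma one_sub_pow_succ_ne_zero {q : ℂ} (hq : ∀ n, qPoch q q n ≠ 0) (k : ℕ) :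
    1 - q ^ (k + 1) ≠ 0 := by
  have := hq (k + 1)
  rw [qPoch_succ, ← pow_succ'] at this
  exact right_ne_zero_of_mul this

lemma Nat.add_choose_two (m n : ℕ) : (m + n).choose 2 = m.choose 2 + m * n + n.choose 2 := by
  qify [Nat.cast_choose_two]
  ring

/-- `(q;q)ₘ⁻¹` times the `i`-th term of the terminating `q`-Chu–Vandermonde identity
`∑ᵢ [m, i]_q (-cq;q)ᵢ q^(i choose 2) bⁱ (bcq^(i+1);q)_(m-i) = (-b;q)ₘ`, written with
`(bcq^(i+1);q)_(m-i)` in place of `(bcq;q)ₘ / (bcq;q)ᵢ` so that no denominator can vanish. -/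
noncomputable def qChuVandermondeTerm (q b c : ℂ) (m i : ℕ) : ℂ :=
  qPoch (-(c * q)) q i * q ^ i.choose 2 * b ^ i / (qPoch q q i * qPoch q q (m - i)) *
    qPoch (b * c * q ^ (i + 1)) q (m - i)

lemma qChuVandermondeTerm_pascal {q : ℂ} (hq : ∀ n, qPoch q q n ≠ 0) (b c : ℂ) {m k : ℕ}
    (hk : k ≤ m) :
    q ^ k * (1 - q ^ (m + 1 - k)) * qChuVandermondeTerm q b c (m + 1) k
      + (1 - q ^ (k + 1)) * qChuVandermondeTerm q b c (m + 1) (k + 1)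
      = (1 + b) * qChuVandermondeTerm q (b * q) c m k := by
  obtain ⟨l, rfl⟩ := Nat.exists_eq_add_of_le hk
  simp only [qChuVandermondeTerm]
  rw [show k + l + 1 - k = l + 1 by omega, show k + l + 1 - (k + 1) = l by omega,
    Nat.add_sub_cancel_left, qPoch_succ' (b * c * q ^ (k + 1)) q l, qPoch_succ q q l, qPoch_succ q q k,
    qPoch_succ _ q k, Nat.choose_succ_succ', Nat.choose_one_right, one_add_one_eq_two,
    ← pow_succ', ← pow_succ', show b * c * q ^ (k + 1) * q = b * q * c * q ^ (k + 1) by ring,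
    show b * c * q ^ (k + 1 + 1) = b * q * c * q ^ (k + 1) by ring]
  have e1 := hq k
  have e2 := hq l
  have e3 := one_sub_pow_succ_ne_zero hq k
  have e4 := one_sub_pow_succ_ne_zero hq l
  field_simp
  ring

lemma sum_qChuVandermondeTerm {q : ℂ} (hq : ∀ n, qPoch q q n ≠ 0) (b c : ℂ) (m : ℕ) :
    ∑ i ∈ range (m + 1), qChuVandermondeTerm q b c m i = qPoch (-b) q m / qPoch q q m := by
  induction m generalizing b with
  | zero => simp [qChuVandermondeTerm, qPoch]
  | succ m ih =>
    set T := qChuVandermondeTerm q b c (m + 1)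
    have hrec : (∑ i ∈ range (m + 1 + 1), T i) * (1 - q ^ (m + 1))
        = (1 + b) * ∑ k ∈ range (m + 1), qChuVandermondeTerm q (b * q) c m k := calc
      _ = ∑ i ∈ range (m + 1 + 1), (q ^ i * (1 - q ^ (m + 1 - i)) * T i + (1 - q ^ i) * T i) := by
        rw [sum_mul]
        refine sum_congr rfl fun i hi => ?_
        rw [← pow_sub_mul_pow q (Nat.le_of_lt_succ (mem_range.mp hi))]
        ring
      _ = ∑ k ∈ range (m + 1),
            (q ^ k * (1 - q ^ (m + 1 - k)) * T k + (1 - q ^ (k + 1)) * T (k + 1)) := by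
        rw [sum_add_distrib, sum_range_succ, sum_range_succ' (fun i => (1 - q ^ i) * T i),
          sum_add_distrib]
        simp only [tsub_self, pow_zero, sub_self, mul_zero, zero_mul, add_zero]
      _ = _ := by
        rw [mul_sum]
        exact sum_congr rfl fun k hk =>
          qChuVandermondeTerm_pascal hq b c (Nat.le_of_lt_succ (mem_range.mp hk))
    rw [ih (b * q)] at hrec
    rw [eq_div_iff (hq _), qPoch_succ q q m, ← pow_succ', mul_left_comm, hrec,
      qPoch_succ' (-b), neg_mul, sub_neg_eq_add]
    field_simp [hq m]

lemma sum_forward_move_F2_coeff {q a : ℂ} (hq : ∀ n, qPoch q q n ≠ 0)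
    (haq : ∀ n, qPoch (a * q) q n ≠ 0) (hma : ∀ n, qPoch (-a) q n ≠ 0) (x : ℂ) (t m : ℕ) :
    ∑ i ∈ range (m + 1), qPoch (-q) q (t + i) * q ^ (t + i).choose 2 * a ^ (t + i) /
        (qPoch q q (m - i) * qPoch (-a) q (t + m)) *
          (x / (qPoch q q i * qPoch (a * q) q (t + i + t)))
      = qPoch (-q) q t * q ^ t.choose 2 * a ^ t / qPoch (-a) q t * x /
        (qPoch q q m * qPoch (a * q) q (t + m + t)) := by
  have hterm : ∀ i ∈ range (m + 1),
      qPoch (-q) q (t + i) * q ^ (t + i).choose 2 * a ^ (t + i) /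
          (qPoch q q (m - i) * qPoch (-a) q (t + m)) *
          (x / (qPoch q q i * qPoch (a * q) q (t + i + t)))
        = qPoch (-q) q t * q ^ t.choose 2 * a ^ t * x /
            (qPoch (-a) q (t + m) * qPoch (a * q) q (t + m + t)) *
          qChuVandermondeTerm q (a * q ^ t) (q ^ t) m i := by
    intro i hi
    obtain ⟨l, rfl⟩ := Nat.exists_eq_add_of_le (Nat.le_of_lt_succ (mem_range.mp hi))
    have hsplit : qPoch (a * q) q (t + (i + l) + t)
        = qPoch (a * q) q (t + i + t) * qPoch (a * q ^ t * q ^ t * q ^ (i + 1)) q l := by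
      rw [show t + (i + l) + t = t + i + t + l by ring, qPoch_add]
      congr 2
      ring
    have hpow : q ^ (t + i).choose 2 = q ^ t.choose 2 * (q ^ t) ^ i * q ^ i.choose 2 := by
      rw [Nat.add_choose_two, pow_add, pow_add, pow_mul]
    rw [qChuVandermondeTerm, Nat.add_sub_cancel_left, hsplit, qPoch_add (-q), hpow, pow_add a,
      show -q * q ^ t = -(q ^ t * q) by ring]
    have e1 := hq i
    have e2 := hq l
    have e3 := hma (t + (i + l))
    have e4 := haq (t + i + t)
    have e5 := right_ne_zero_of_mul (hsplit ▸ haq (t + (i + l) + t))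
    -- otherwise `field_simp` normalizes the argument of this factor and no longer sees `e5`
    generalize qPoch (a * q ^ t * q ^ t * q ^ (i + 1)) q l = B at e5 ⊢
    field_simp
    ring
  have hb := hma (t + m)
  rw [qPoch_add, neg_mul] at hb
  rw [sum_congr rfl hterm, ← mul_sum, sum_qChuVandermondeTerm hq, qPoch_add (-a) q t m, neg_mul]
  have e1 := left_ne_zero_of_mul hb
  have e2 := right_ne_zero_of_mul hb
  have e3 := hq m
  have e4 := haq (t + m + t)
  field_simp

theorem forward_move_F2_general (q a : ℂ) (hq1 : ‖q‖ < 1)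
    (ha : ∀ m : ℕ, 1 ≤ m → a * q ^ m ≠ 1)
    (ha' : ∀ m : ℕ, 1 + a * q ^ m ≠ 0)
    (α β : ℕ → ℂ) (h : IsBaileyPair q a α β) :
    IsBaileyPair q a
      (fun n => qPoch (-q) q n * q ^ (n.choose 2) * a ^ n / qPoch (-a) q n * α n)
      (fun n => ∑ j ∈ Finset.range (n + 1),
        qPoch (-q) q j * q ^ (j.choose 2) * a ^ j /
          (qPoch q q (n - j) * qPoch (-a) q n) * β j) := by
  have hq : ∀ n, qPoch q q n ≠ 0 := qPoch_self_ne_zero hq1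
  have haq : ∀ n, qPoch (a * q) q n ≠ 0 :=
    qPoch_ne_zero fun t => by rw [mul_assoc, ← pow_succ']; exact ha _ t.succ_pos
  have hma : ∀ n, qPoch (-a) q n ≠ 0 := qPoch_ne_zero fun t h' => ha' t (by linear_combination -h')
  rw [IsBaileyPair] at h
  intro n
  simp only [h, mul_sum, range_eq_Ico]
  rw [← sum_Ico_Ico_comm]
  refine sum_congr rfl fun t ht => ?_
  obtain ⟨m, rfl⟩ := Nat.exists_eq_add_of_le (Nat.le_of_lt_succ (mem_Ico.mp ht).2)
  rw [sum_Ico_eq_sum_range, show t + m + 1 - t = m + 1 by omega]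
  simp only [Nat.add_sub_add_left, Nat.add_sub_cancel_left]
  exact sum_forward_move_F2_coeff hq haq hma (α t) t m

theorem forward_move_F2 (q a : ℂ) (hq0 : 0 < ‖q‖) (hq1 : ‖q‖ < 1)
    (ha : ∀ m : ℕ, 1 ≤ m → a * q ^ m ≠ 1)
    (ha' : ∀ m : ℕ, 1 + a * q ^ m ≠ 0)
    (α β : ℕ → ℂ) (h : IsBaileyPair q a α β) :
    IsBaileyPair q a
      (fun n => qPoch (-q) q n * q ^ (n.choose 2) * a ^ n / qPoch (-a) q n * α n)
      (fun n => ∑ j ∈ Finset.range (n + 1),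
        qPoch (-q) q j * q ^ (j.choose 2) * a ^ j /
          (qPoch q q (n - j) * qPoch (-a) q n) * β j) :=
  forward_move_F2_general q a hq1 ha ha' α β h
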